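/- Let (X, Σ, μ) be σ-finite with decomposition X = (⋃ₙ Aₙ) ∪ B, where the Aₙ are pairwise disjoint atoms and B is non-atomic. Let Φ₁, Φ₂, Φ₃ be Young functions with Φ₁(xy) ≤ Φ₂(x) + Φ₃(y) for all x, y ≥ 0. If u ∈ L⁰(Σ) induces a bounded multiplication operator M_u: L^{Φ₁}(Σ) → L^{Φ₂}(Σ), then (i) u = 0 μ-a.e. on B, and (ii) sup_{n} |u(Aₙ)| · Φ₃⁻¹(1/μ(Aₙ)) < ∞. -/

import Mathlib

open MeasureTheory Filter Topology

/-- A Young function: continuous, convex, even, vanishing exactly at 0,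
with superlinear growth at infinity. -/
structure YoungFunction where
  toFun : ℝ → ℝ
  continuous' : Continuous toFun
  convexOn' : ConvexOn ℝ Set.univ toFun
  even' : ∀ x, toFun (-x) = toFun x
  zero_iff' : ∀ x, toFun x = 0 ↔ x = 0
  tendsto_atTop' : Tendsto (fun x => toFun x / x) atTop atTop

instance : CoeFun YoungFunction fun _ => ℝ → ℝ := ⟨YoungFunction.toFun⟩

variable {X : Type*} [MeasurableSpace X]

/-- Membership in the Orlicz space `L^Φ(μ)`. -/
def MemOrlicz (Φ : YoungFunction) (μ : Measure X) (f : X → ℝ) : Prop :=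
  AEStronglyMeasurable f μ ∧ ∃ k > 0, Integrable (fun x => Φ (k * f x)) μ

/-- The Luxemburg norm on the Orlicz space `L^Φ(μ)`. -/
noncomputable def luxNorm (Φ : YoungFunction) (μ : Measure X) (f : X → ℝ) : ℝ :=
  sInf {k : ℝ | 0 < k ∧ ∫ x, Φ (f x / k) ∂μ ≤ 1}

/-- The generalized (right) inverse of a Young function on `[0,∞)`. -/
noncomputable def yInv (Φ : YoungFunction) (y : ℝ) : ℝ :=
  sSup {x : ℝ | 0 ≤ x ∧ Φ x ≤ y}

/-- `Φ` satisfies the `Δ₂` condition globally. -/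
def YoungDeltaTwo (Φ : YoungFunction) : Prop :=
  ∃ k > 0, ∀ x : ℝ, 0 ≤ x → Φ (2 * x) ≤ k * Φ x

/-- `Φ` satisfies the `Δ'` condition globally, with constant `c`. -/
def YoungDeltaPrime (Φ : YoungFunction) (c : ℝ) : Prop :=
  0 < c ∧ ∀ x y : ℝ, 0 ≤ x → 0 ≤ y → Φ (x * y) ≤ c * Φ x * Φ y

/-- `Φ` satisfies the `∇'` condition globally, with constant `b`. -/
def YoungNablaPrime (Φ : YoungFunction) (b : ℝ) : Prop :=
  0 < b ∧ ∀ x y : ℝ, 0 ≤ x → 0 ≤ y → Φ x * Φ y ≤ Φ (b * x * y)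

/-- `Φ ≺ Ψ` : `Φ` is weaker than `Ψ`. -/
def YoungWeaker (Φ Ψ : YoungFunction) : Prop :=
  ∃ a > 0, ∃ x₀ : ℝ, 0 ≤ x₀ ∧ ∀ x : ℝ, x₀ ≤ x → Φ x ≤ Ψ (a * x)

/-- `A` is an atom of the measure `μ`. -/
def IsAtomSet (μ : Measure X) (A : Set X) : Prop :=
  MeasurableSet A ∧ 0 < μ A ∧
    ∀ B : Set X, MeasurableSet B → B ⊆ A → μ B = 0 ∨ μ B = μ A

/-- `μ` is non-atomic on the set `S`. -/
def NonAtomicOn (μ : Measure X) (S : Set X) : Prop :=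
  ∀ A : Set X, A ⊆ S → ¬ IsAtomSet μ A

/-- A linear map between Orlicz spaces (given as a map on functions) is bounded. -/
def OrliczBounded (Φ₁ Φ₂ : YoungFunction) (μ : Measure X)
    (Tmap : (X → ℝ) → (X → ℝ)) : Prop :=
  ∃ C > 0, ∀ f : X → ℝ, MemOrlicz Φ₁ μ f →
    MemOrlicz Φ₂ μ (Tmap f) ∧ luxNorm Φ₂ μ (Tmap f) ≤ C * luxNorm Φ₁ μ f

/-- The atomic decomposition of a σ-finite measure space: `X = (⋃ n, A n) ∪ B`
with the `A n` pairwise disjoint atoms of finite measure and `B` non-atomic. -/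
def AtomicDecomposition (μ : Measure X) (A : ℕ → Set X) (B : Set X) : Prop :=
  (∀ n, IsAtomSet μ (A n)) ∧ (∀ n, μ (A n) < ⊤) ∧
    Pairwise (Function.onFun Disjoint A) ∧ (∀ n, Disjoint (A n) B) ∧
    MeasurableSet B ∧ NonAtomicOn μ B ∧ (⋃ n, A n) ∪ B = Set.univ


/-! Test `M_u` on indicators `χ_F` of sets with `0 < μ F < ∞`. With `t = 1 / μ F`, one has
`‖χ_F‖_{Φ₁} ≤ 1 / Φ₁⁻¹(t)`, while `ε ≤ |u| ≤ m` on `F` gives `‖u χ_F‖_{Φ₂} ≥ ε / Φ₂⁻¹(t)`.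
The Young-type inequality for `Φ₁, Φ₂, Φ₃` yields `Φ₂⁻¹(t/2) Φ₃⁻¹(t/2) ≤ Φ₁⁻¹(t)`, and together
with `Φ₂⁻¹(t) ≤ 2 Φ₂⁻¹(t/2)` boundedness of `M_u` becomes `ε Φ₃⁻¹(t/2) ≤ 2C` uniformly in `F`.
On an atom `u` is constant, which is (ii). A non-atomic set of positive measure has subsets of
arbitrarily small positive measure, on which `Φ₃⁻¹(t/2)` is unbounded; so every level set
`{ε ≤ |u| ≤ m}` inside `B` is null, which is (i). -/
open Set

namespace YoungFunction

variable (Φ : YoungFunction)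

theorem map_zero : Φ 0 = 0 := (Φ.zero_iff' 0).mpr rfl

theorem map_abs (x : ℝ) : Φ |x| = Φ x := by
  rcases abs_choice x with h | h
  · rw [h]
  · rw [h, Φ.even']

theorem nonneg (x : ℝ) : 0 ≤ Φ x := by
  have h := Φ.convexOn'.2 (mem_univ x) (mem_univ (-x))
    (by norm_num : (0:ℝ) ≤ 1/2) (by norm_num : (0:ℝ) ≤ 1/2) (by norm_num)
  simp only [smul_eq_mul, Φ.even'] at h
  rw [show (1/2 : ℝ) * x + 1/2 * -x = 0 by ring, Φ.map_zero] at h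
  linarith

theorem map_mul_le {c : ℝ} (x : ℝ) (hc₀ : 0 ≤ c) (hc₁ : c ≤ 1) : Φ (c * x) ≤ c * Φ x := by
  have h := Φ.convexOn'.2 (mem_univ x) (mem_univ 0) hc₀ (sub_nonneg.2 hc₁) (by ring)
  simp only [smul_eq_mul, mul_zero, add_zero, Φ.map_zero] at h
  exact h

theorem monotoneOn : MonotoneOn Φ (Ici 0) := by
  intro a ha b hb hab
  rcases (show (0:ℝ) ≤ b from hb).eq_or_lt with rfl | hb
  · rw [le_antisymm hab ha]
  have hc₁ : a / b ≤ 1 := (div_le_one hb).2 hab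
  calc Φ a = Φ (a / b * b) := by rw [div_mul_cancel₀ a hb.ne']
    _ ≤ a / b * Φ b := Φ.map_mul_le b (div_nonneg ha hb.le) hc₁
    _ ≤ Φ b := mul_le_of_le_one_left (Φ.nonneg b) hc₁

theorem map_le_map_of_abs_le_abs {a b : ℝ} (h : |a| ≤ |b|) : Φ a ≤ Φ b := by
  rw [← Φ.map_abs a, ← Φ.map_abs b]
  exact Φ.monotoneOn (abs_nonneg a) (abs_nonneg b) h

theorem tendsto_atTop : Tendsto Φ atTop atTop :=
  tendsto_atTop_mono' atTop ((eventually_ge_atTop 1).mono fun x hx => div_le_self (Φ.nonneg x) hx)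
    Φ.tendsto_atTop'

theorem bddAbove_setOf (t : ℝ) : BddAbove {x : ℝ | 0 ≤ x ∧ Φ x ≤ t} := by
  obtain ⟨x₁, hx₁⟩ := eventually_atTop.1 (Φ.tendsto_atTop.eventually_gt_atTop t)
  refine ⟨x₁, fun x hx => ?_⟩
  by_contra! h
  exact (hx₁ x h.le).not_ge hx.2

theorem le_yInv {x t : ℝ} (hx : 0 ≤ x) (h : Φ x ≤ t) : x ≤ yInv Φ t :=
  le_csSup (Φ.bddAbove_setOf t) ⟨hx, h⟩

theorem yInv_nonneg {t : ℝ} (ht : 0 ≤ t) : 0 ≤ yInv Φ t :=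
  Φ.le_yInv le_rfl (by rwa [Φ.map_zero])

theorem map_yInv_le {t : ℝ} (ht : 0 ≤ t) : Φ (yInv Φ t) ≤ t := by
  have hclosed : IsClosed {x : ℝ | 0 ≤ x ∧ Φ x ≤ t} :=
    (isClosed_le continuous_const continuous_id).inter (isClosed_le Φ.continuous' continuous_const)
  exact (hclosed.csSup_mem ⟨0, le_rfl, by rwa [Φ.map_zero]⟩ (Φ.bddAbove_setOf t)).2

theorem yInv_pos {t : ℝ} (ht : 0 < t) : 0 < yInv Φ t := by
  have hnear : ∀ᶠ x in 𝓝 (0:ℝ), Φ x < t :=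
    Φ.continuous'.continuousAt.eventually_lt_const (by rwa [Φ.map_zero])
  obtain ⟨x, hxt, hx⟩ := ((hnear.filter_mono nhdsWithin_le_nhds).and self_mem_nhdsWithin).exists
    (f := 𝓝[>] (0:ℝ))
  exact (show (0:ℝ) < x from hx).trans_le (Φ.le_yInv (le_of_lt hx) hxt.le)

theorem yInv_le_two_mul_yInv_half {t : ℝ} (ht : 0 ≤ t) : yInv Φ t ≤ 2 * yInv Φ (t / 2) := by
  refine csSup_le ⟨0, le_rfl, by rwa [Φ.map_zero]⟩ fun x ⟨hx, hxt⟩ => ?_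
  have hhalf : Φ (x / 2) ≤ t / 2 := by
    have := Φ.map_mul_le x (by norm_num : (0:ℝ) ≤ 1/2) (by norm_num)
    rw [div_eq_inv_mul, ← one_div]
    linarith
  linarith [Φ.le_yInv (by linarith) hhalf]

theorem div_yInv_le_of_map_div_le {c k t : ℝ} (hc : 0 ≤ c) (hk : 0 < k) (ht : 0 < t)
    (h : Φ (c / k) ≤ t) : c / yInv Φ t ≤ k := by
  have := Φ.le_yInv (div_nonneg hc hk.le) h
  rw [div_le_iff₀ hk] at this
  rw [div_le_iff₀ (Φ.yInv_pos ht)]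
  linarith

theorem yInv_mul_yInv_le {Φ₁ Φ₂ Φ₃ : YoungFunction}
    (hΦ : ∀ x y : ℝ, 0 ≤ x → 0 ≤ y → Φ₁ (x * y) ≤ Φ₂ x + Φ₃ y) {s s' : ℝ} (hs : 0 ≤ s)
    (hs' : 0 ≤ s') : yInv Φ₂ s * yInv Φ₃ s' ≤ yInv Φ₁ (s + s') :=
  Φ₁.le_yInv (mul_nonneg (Φ₂.yInv_nonneg hs) (Φ₃.yInv_nonneg hs')) <|
    (hΦ _ _ (Φ₂.yInv_nonneg hs) (Φ₃.yInv_nonneg hs')).trans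
      (add_le_add (Φ₂.map_yInv_le hs) (Φ₃.map_yInv_le hs'))

end YoungFunction

section Luxemburg

variable {μ : Measure X} (Φ : YoungFunction) {F : Set X}

theorem integral_map_indicator_div (hF : MeasurableSet F) (g : X → ℝ) (k : ℝ) :
    ∫ x, Φ (F.indicator g x / k) ∂μ = ∫ x in F, Φ (g x / k) ∂μ := by
  have hind : (fun x => Φ (F.indicator g x / k)) = F.indicator fun x => Φ (g x / k) := by
    funext x
    by_cases hx : x ∈ F <;> simp [hx, Φ.map_zero]
  rw [hind, integral_indicator hF]

theorem integrableOn_map_div_of_abs_le (hfin : μ F < ⊤) {g : X → ℝ}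
    (hg : AEStronglyMeasurable g (μ.restrict F)) {m : ℝ}
    (hbd : ∀ᵐ x ∂μ.restrict F, |g x| ≤ m) (k : ℝ) :
    IntegrableOn (fun x => Φ (g x / k)) F μ := by
  refine Integrable.mono' (integrableOn_const hfin.ne (C := Φ (m / k)))
    (Φ.continuous'.comp_aestronglyMeasurable (hg.mul_const k⁻¹)) ?_
  filter_upwards [hbd] with x hx
  rw [Real.norm_of_nonneg (Φ.nonneg _)]
  refine Φ.map_le_map_of_abs_le_abs ?_
  rw [abs_div, abs_div, abs_of_nonneg ((abs_nonneg _).trans hx)]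
  gcongr

theorem integral_map_indicator_div_le_one (hF : MeasurableSet F) (h0 : 0 < μ F) (hfin : μ F < ⊤)
    {g : X → ℝ} {m : ℝ} (hm : 0 < m) (hbd : ∀ᵐ x ∂μ.restrict F, |g x| ≤ m) :
    ∫ x, Φ (F.indicator g x / (m / yInv Φ (1 / (μ F).toReal))) ∂μ ≤ 1 := by
  set t := 1 / (μ F).toReal
  have hμF : 0 < (μ F).toReal := ENNReal.toReal_pos h0.ne' hfin.ne
  have ht : 0 < t := by positivity
  have hy := Φ.yInv_pos ht
  rw [integral_map_indicator_div Φ hF]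
  calc ∫ x in F, Φ (g x / (m / yInv Φ t)) ∂μ ≤ ∫ _ in F, t ∂μ := by
        refine integral_mono_of_nonneg (.of_forall fun x => Φ.nonneg _)
          (integrableOn_const hfin.ne) ?_
        filter_upwards [hbd] with x hx
        refine le_trans (Φ.map_le_map_of_abs_le_abs ?_) (Φ.map_yInv_le ht.le)
        rw [abs_div, abs_of_pos (div_pos hm hy), abs_of_pos hy, div_le_iff₀ (div_pos hm hy),
          mul_div_cancel₀ _ hy.ne']
        exact hx
    _ = 1 := by rw [setIntegral_const, smul_eq_mul, measureReal_def, mul_one_div_cancel hμF.ne']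

theorem luxNorm_indicator_le (hF : MeasurableSet F) (h0 : 0 < μ F) (hfin : μ F < ⊤)
    {g : X → ℝ} {m : ℝ} (hm : 0 < m) (hbd : ∀ᵐ x ∂μ.restrict F, |g x| ≤ m) :
    luxNorm Φ μ (F.indicator g) ≤ m / yInv Φ (1 / (μ F).toReal) :=
  csInf_le ⟨0, fun _ hk => hk.1.le⟩
    ⟨div_pos hm (Φ.yInv_pos (one_div_pos.2 (ENNReal.toReal_pos h0.ne' hfin.ne))),
      integral_map_indicator_div_le_one Φ hF h0 hfin hm hbd⟩

theorem div_yInv_le_luxNorm_indicator (hF : MeasurableSet F) (h0 : 0 < μ F) (hfin : μ F < ⊤)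
    {g : X → ℝ} (hg : AEStronglyMeasurable g (μ.restrict F)) {ε m : ℝ} (hε : 0 ≤ ε)
    (hbd : ∀ᵐ x ∂μ.restrict F, ε ≤ |g x| ∧ |g x| ≤ m) :
    ε / yInv Φ (1 / (μ F).toReal) ≤ luxNorm Φ μ (F.indicator g) := by
  -- The bound `m` keeps the set defining `luxNorm` nonempty (`sInf ∅ = 0`) and makes
  -- `Φ (g / k)` integrable on `F` (a non-integrable function has integral `0`).
  have hμF : 0 < (μ F).toReal := ENNReal.toReal_pos h0.ne' hfin.ne
  have hbd' : ∀ᵐ x ∂μ.restrict F, |g x| ≤ |m| + 1 := by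
    filter_upwards [hbd] with x hx
    linarith [le_abs_self m, hx.2]
  have hm : 0 < |m| + 1 := by positivity
  refine le_csInf ⟨_, div_pos hm (Φ.yInv_pos (by positivity)),
    integral_map_indicator_div_le_one Φ hF h0 hfin hm hbd'⟩ ?_
  rintro k ⟨hk, hint⟩
  refine Φ.div_yInv_le_of_map_div_le hε hk (by positivity) ?_
  rw [integral_map_indicator_div Φ hF] at hint
  have hlow : (μ F).toReal * Φ (ε / k) ≤ ∫ x in F, Φ (g x / k) ∂μ := by
    rw [← smul_eq_mul, ← measureReal_def, ← setIntegral_const]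
    refine integral_mono_ae (integrableOn_const hfin.ne)
      (integrableOn_map_div_of_abs_le Φ hfin hg hbd' k) ?_
    filter_upwards [hbd] with x hx
    refine Φ.map_le_map_of_abs_le_abs ?_
    rw [abs_div, abs_div, abs_of_nonneg hε]
    gcongr
    exact hx.1
  rw [le_div_iff₀ hμF]
  linarith

theorem memOrlicz_indicator_one (hF : MeasurableSet F) (hfin : μ F < ⊤) :
    MemOrlicz Φ μ (F.indicator 1) := by
  refine ⟨(measurable_one.indicator hF).aestronglyMeasurable, 1, one_pos, ?_⟩
  have hind : (fun x => Φ (1 * F.indicator 1 x)) = F.indicator fun _ => Φ 1 := by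
    funext x
    by_cases hx : x ∈ F <;> simp [hx, Φ.map_zero]
  rw [hind]
  exact (integrable_indicator_iff hF).2 (integrableOn_const hfin.ne)

end Luxemburg

theorem OrliczBounded.exists_mul_yInv_half_le {μ : Measure X} {Φ₁ Φ₂ Φ₃ : YoungFunction}
    (hΦ : ∀ x y : ℝ, 0 ≤ x → 0 ≤ y → Φ₁ (x * y) ≤ Φ₂ x + Φ₃ y) {u : X → ℝ} (hu : Measurable u)
    (hb : OrliczBounded Φ₁ Φ₂ μ fun f x => u x * f x) :
    ∃ C : ℝ, ∀ F : Set X, MeasurableSet F → 0 < μ F → μ F < ⊤ → ∀ ε m : ℝ, 0 ≤ ε →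
      (∀ᵐ x ∂μ.restrict F, ε ≤ |u x| ∧ |u x| ≤ m) →
        ε * yInv Φ₃ (1 / (μ F).toReal / 2) ≤ C := by
  obtain ⟨C, hC, hbd⟩ := hb
  refine ⟨2 * C, fun F hF h0 hfin ε m hε hu_bdd => ?_⟩
  set t := 1 / (μ F).toReal
  have ht : 0 < t := one_div_pos.2 (ENNReal.toReal_pos h0.ne' hfin.ne)
  have hmul : (fun x => u x * F.indicator 1 x) = F.indicator u := by
    funext x
    by_cases hx : x ∈ F <;> simp [hx]
  have hnorm : ε / yInv Φ₂ t ≤ C / yInv Φ₁ t :=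
    calc ε / yInv Φ₂ t ≤ luxNorm Φ₂ μ (F.indicator u) :=
          div_yInv_le_luxNorm_indicator Φ₂ hF h0 hfin hu.aestronglyMeasurable hε hu_bdd
      _ ≤ C * luxNorm Φ₁ μ (F.indicator 1) := hmul ▸ (hbd _ (memOrlicz_indicator_one Φ₁ hF hfin)).2
      _ ≤ C * (1 / yInv Φ₁ t) := by
          gcongr
          exact luxNorm_indicator_le Φ₁ hF h0 hfin one_pos (.of_forall fun x => by simp)
      _ = C / yInv Φ₁ t := mul_one_div C _
  rw [div_le_div_iff₀ (Φ₂.yInv_pos ht) (Φ₁.yInv_pos ht)] at hnorm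
  have ha : 0 < yInv Φ₂ (t / 2) := Φ₂.yInv_pos (half_pos ht)
  refine le_of_mul_le_mul_right ?_ ha
  calc ε * yInv Φ₃ (t / 2) * yInv Φ₂ (t / 2) ≤ ε * yInv Φ₁ t := by
        rw [mul_assoc, mul_comm (yInv Φ₃ _)]
        gcongr
        simpa using YoungFunction.yInv_mul_yInv_le hΦ (half_pos ht).le (half_pos ht).le
    _ ≤ C * yInv Φ₂ t := hnorm
    _ ≤ C * (2 * yInv Φ₂ (t / 2)) := by gcongr; exact Φ₂.yInv_le_two_mul_yInv_half ht.le
    _ = 2 * C * yInv Φ₂ (t / 2) := by ring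

theorem exists_two_mul_measure_le_of_not_isAtomSet {μ : Measure X} {F : Set X}
    (hF : MeasurableSet F) (h0 : 0 < μ F) (hF_atom : ¬ IsAtomSet μ F) :
    ∃ G ⊆ F, MeasurableSet G ∧ 0 < μ G ∧ 2 * μ G ≤ μ F := by
  simp only [IsAtomSet, hF, h0, true_and, not_forall, not_or] at hF_atom
  obtain ⟨G, hG, hGF, hG0, hGF_ne⟩ := hF_atom
  have hsplit : μ G + μ (F \ G) = μ F := by
    rw [measure_add_sdiff hG.nullMeasurableSet, union_eq_self_of_subset_left hGF]
  rcases le_total (μ G) (μ (F \ G)) with h | h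
  · refine ⟨G, hGF, hG, pos_iff_ne_zero.2 hG0, ?_⟩
    rw [two_mul, ← hsplit]
    gcongr
  · refine ⟨F \ G, sdiff_subset, hF.diff hG, pos_iff_ne_zero.2 fun h' => hGF_ne ?_, ?_⟩
    · rw [← hsplit, h', add_zero]
    · rw [two_mul, ← hsplit, add_comm]
      gcongr

theorem NonAtomicOn.exists_measure_pos_le {μ : Measure X} {E : Set X} (hna : NonAtomicOn μ E)
    (hE : MeasurableSet E) (h0 : 0 < μ E) (hfin : μ E < ⊤) {δ : ENNReal} (hδ : 0 < δ) :
    ∃ F ⊆ E, MeasurableSet F ∧ 0 < μ F ∧ μ F ≤ δ := by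
  have hhalving : ∀ n : ℕ, ∃ F ⊆ E, MeasurableSet F ∧ 0 < μ F ∧ 2 ^ n * μ F ≤ μ E := by
    intro n
    induction n with
    | zero => exact ⟨E, subset_rfl, hE, h0, by simp⟩
    | succ n ih =>
      obtain ⟨F, hFE, hF, hF0, hFle⟩ := ih
      obtain ⟨G, hGF, hG, hG0, hGle⟩ :=
        exists_two_mul_measure_le_of_not_isAtomSet hF hF0 (hna F hFE)
      refine ⟨G, hGF.trans hFE, hG, hG0, ?_⟩
      calc 2 ^ (n + 1) * μ G = 2 ^ n * (2 * μ G) := by rw [pow_succ, mul_assoc]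
        _ ≤ 2 ^ n * μ F := by gcongr
        _ ≤ μ E := hFle
  obtain ⟨n, hn⟩ := ENNReal.exists_nat_mul_gt hδ.ne' hfin.ne
  obtain ⟨F, hFE, hF, hF0, hFle⟩ := hhalving n
  refine ⟨F, hFE, hF, hF0, ?_⟩
  have hpow : (n : ENNReal) ≤ 2 ^ n := by exact_mod_cast (Nat.lt_two_pow_self).le
  have hlt : 2 ^ n * μ F < 2 ^ n * δ := hFle.trans_lt (hn.trans_le (by gcongr))
  exact (lt_of_mul_lt_mul_left' hlt).le

theorem NonAtomicOn.mono {μ : Measure X} {S T : Set X} (hS : NonAtomicOn μ S) (hTS : T ⊆ S) :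
    NonAtomicOn μ T :=
  fun A hA => hS A (hA.trans hTS)

theorem NonAtomicOn.exists_lt_yInv_half {μ : Measure X} [SigmaFinite μ] {E : Set X}
    (hna : NonAtomicOn μ E) (hE : MeasurableSet E) (h0 : 0 < μ E) (Φ : YoungFunction) (R : ℝ) :
    ∃ F ⊆ E, MeasurableSet F ∧ 0 < μ F ∧ μ F < ⊤ ∧ R < yInv Φ (1 / (μ F).toReal / 2) := by
  obtain ⟨E', hE', hE'E, hE'0, hE'fin⟩ := Measure.exists_subset_measure_lt_top hE h0
  set x₀ := max R 0 + 1
  have hx₀ : 0 < x₀ := by positivity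
  have hΦx₀ : 0 < Φ x₀ := (Φ.nonneg x₀).lt_of_ne' fun h => hx₀.ne' ((Φ.zero_iff' x₀).1 h)
  obtain ⟨F, hFE', hF, hF0, hFle⟩ := (hna.mono hE'E).exists_measure_pos_le hE' hE'0 hE'fin
    (δ := ENNReal.ofReal (1 / Φ x₀ / 2)) (ENNReal.ofReal_pos.2 (by positivity))
  have hFfin : μ F < ⊤ := hFle.trans_lt ENNReal.ofReal_lt_top
  have hμF : (μ F).toReal ≤ 1 / Φ x₀ / 2 := ENNReal.toReal_le_of_le_ofReal (by positivity) hFle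
  have hμF0 : 0 < (μ F).toReal := ENNReal.toReal_pos hF0.ne' hFfin.ne
  refine ⟨F, hFE'.trans hE'E, hF, hF0, hFfin, ?_⟩
  have hsmall : Φ x₀ ≤ 1 / (μ F).toReal / 2 := by
    rw [div_div, le_one_div hΦx₀ (by positivity), ← le_div_iff₀ two_pos]
    exact hμF
  calc R < x₀ := by linarith [le_max_left R 0]
    _ ≤ yInv Φ (1 / (μ F).toReal / 2) := Φ.le_yInv hx₀.le hsmall

theorem OrliczBounded.ae_restrict_eq_zero_of_nonAtomicOn {μ : Measure X} [SigmaFinite μ]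
    {B : Set X} (hB : MeasurableSet B) (hna : NonAtomicOn μ B) {Φ₁ Φ₂ Φ₃ : YoungFunction}
    (hΦ : ∀ x y : ℝ, 0 ≤ x → 0 ≤ y → Φ₁ (x * y) ≤ Φ₂ x + Φ₃ y) {u : X → ℝ} (hu : Measurable u)
    (hb : OrliczBounded Φ₁ Φ₂ μ fun f x => u x * f x) :
    ∀ᵐ x ∂μ.restrict B, u x = 0 := by
  obtain ⟨C, hC⟩ := hb.exists_mul_yInv_half_le hΦ hu
  have hlevel : ∀ m n : ℕ, μ (B ∩ {x | 1 / ((m : ℝ) + 1) ≤ |u x| ∧ |u x| ≤ n}) = 0 := by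
    intro m n
    have hE : MeasurableSet (B ∩ {x | 1 / ((m : ℝ) + 1) ≤ |u x| ∧ |u x| ≤ n}) :=
      hB.inter ((measurableSet_le measurable_const hu.abs).inter
        (measurableSet_le hu.abs measurable_const))
    by_contra hE0
    obtain ⟨F, hFE, hF, hF0, hFfin, hlarge⟩ :=
      (hna.mono inter_subset_left).exists_lt_yInv_half hE
        (pos_iff_ne_zero.2 hE0) Φ₃ ((m + 1) * C)
    have hbound := hC F hF hF0 hFfin _ n (by positivity)
      (ae_restrict_of_forall_mem hF fun x hx => (hFE hx).2)
    rw [one_div, inv_mul_le_iff₀ (by positivity)] at hbound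
    linarith
  refine (ae_restrict_iff' hB).2 (ae_iff.2 (measure_mono_null ?_
    (measure_iUnion_null fun m => measure_iUnion_null (hlevel m))))
  intro x hx
  obtain ⟨hxB, hux⟩ : x ∈ B ∧ u x ≠ 0 := by simpa using hx
  obtain ⟨m, hm⟩ := exists_nat_one_div_lt (abs_pos.2 hux)
  obtain ⟨n, hn⟩ := exists_nat_ge |u x|
  exact mem_iUnion₂.2 ⟨m, n, hxB, hm.le, hn⟩

/-- necessary conditions for boundedness of `M_u` in terms of the
atomic decomposition. -/
theorem multiplication_bounded_necessary
    {X : Type*} [MeasurableSpace X] (μ : Measure X) [SigmaFinite μ]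
    (A : ℕ → Set X) (B : Set X) (hdec : AtomicDecomposition μ A B)
    (Φ₁ Φ₂ Φ₃ : YoungFunction)
    (hΦ : ∀ x y : ℝ, 0 ≤ x → 0 ≤ y → Φ₁ (x * y) ≤ Φ₂ x + Φ₃ y)
    (u : X → ℝ) (hu : Measurable u)
    (cu : ℕ → ℝ) (hcu : ∀ n, ∀ᵐ x ∂μ.restrict (A n), u x = cu n)
    (hb : OrliczBounded Φ₁ Φ₂ μ (fun f x => u x * f x)) :
    (∀ᵐ x ∂μ.restrict B, u x = 0) ∧
      ∃ M : ℝ, ∀ n, |cu n| * yInv Φ₃ (1 / (μ (A n)).toReal) ≤ M := by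
  obtain ⟨hatom, hAfin, -, -, hB, hna, -⟩ := hdec
  refine ⟨hb.ae_restrict_eq_zero_of_nonAtomicOn hB hna hΦ hu, ?_⟩
  obtain ⟨C, hC⟩ := hb.exists_mul_yInv_half_le hΦ hu
  refine ⟨2 * C, fun n => ?_⟩
  obtain ⟨hA, hA0, -⟩ := hatom n
  have hu_atom : ∀ᵐ x ∂μ.restrict (A n), |cu n| ≤ |u x| ∧ |u x| ≤ |cu n| :=
    (hcu n).mono fun x hx => by rw [hx]; exact ⟨le_rfl, le_rfl⟩
  calc |cu n| * yInv Φ₃ (1 / (μ (A n)).toReal)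
        ≤ |cu n| * (2 * yInv Φ₃ (1 / (μ (A n)).toReal / 2)) := by
          gcongr
          exact Φ₃.yInv_le_two_mul_yInv_half (by positivity)
    _ = 2 * (|cu n| * yInv Φ₃ (1 / (μ (A n)).toReal / 2)) := by ring
    _ ≤ 2 * C := by gcongr; exact hC _ hA hA0 (hAfin n) _ _ (abs_nonneg _) hu_atom
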